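/- In R = k⟦x,y⟧/(x²y), with γ_n = ((x, y^n),(0,−x)) and δ_n = ((xy, y^{n+1}),(0,−xy)), and M = coker γ_n, the ideal xR is NOT contained in the annihilator of stableHom_R(M,M); consequently Ann(coker γ_n) = (x², xy, y^{n+1})R, a proper subideal of (x, y^{n+1})R. -/

import Mathlib

open CategoryTheory IsLocalRing

universe u

variable (R : Type u) [CommRing R]

/-- The submodule of `Hom_R(M,N)` consisting of maps factoring through a projective module. -/
def projStable (M N : Type u) [AddCommGroup M] [Module R M] [AddCommGroup N] [Module R N] :
    Submodule R (M →ₗ[R] N) where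
  carrier := {f | ∃ (P : Type u) (_ : AddCommGroup P) (_ : Module R P)
    (_ : Module.Projective R P) (g : M →ₗ[R] P) (h : P →ₗ[R] N), f = h.comp g}
  zero_mem' := ⟨PUnit, inferInstance, inferInstance, inferInstance, 0, 0, by ext x; simp⟩
  add_mem' := by
    rintro f f' ⟨P, _, _, _, g, h, rfl⟩ ⟨P', _, _, _, g', h', rfl⟩
    exact ⟨P × P', inferInstance, inferInstance, inferInstance, g.prod g',
      h.comp (LinearMap.fst R P P') + h'.comp (LinearMap.snd R P P'), by ext x; simp⟩
  smul_mem' := by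
    rintro r f ⟨P, _, _, _, g, h, rfl⟩
    exact ⟨P, inferInstance, inferInstance, inferInstance, g, r • h, by ext x; simp⟩

/-- The stable hom module `Hom_R(M,N)/P_R(M,N)`. -/
def stableHom (M N : Type u) [AddCommGroup M] [Module R M] [AddCommGroup N] [Module R N] :=
  (M →ₗ[R] N) ⧸ projStable R M N

noncomputable instance (M N : Type u) [AddCommGroup M] [Module R M] [AddCommGroup N]
    [Module R N] : AddCommGroup (stableHom R M N) :=
  inferInstanceAs (AddCommGroup ((M →ₗ[R] N) ⧸ projStable R M N))

noncomputable instance (M N : Type u) [AddCommGroup M] [Module R M] [AddCommGroup N]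
    [Module R N] : Module R (stableHom R M N) :=
  inferInstanceAs (Module R ((M →ₗ[R] N) ⧸ projStable R M N))

/-- `Ann(M)`: the annihilator of the stable endomorphism module of `M`. -/
noncomputable def stAnn (M : Type u) [AddCommGroup M] [Module R M] : Ideal R :=
  Module.annihilator R (stableHom R M M)

/-- `Ext_R^n(M,N)` as an `R`-module. -/
noncomputable abbrev ExtM (n : ℕ) (M : ModuleCat.{u} R) (N : ModuleCat.{u} R) :
    ModuleCat.{u} R :=
  ((Ext R (ModuleCat.{u} R) n).obj (Opposite.op M)).obj N

/-- `ca^n(R)`, the `n`-th cohomology annihilator ideal. -/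
noncomputable def ca (n : ℕ) : Ideal R :=
  ⨅ (m : ℕ) (_ : n ≤ m) (M : ModuleCat.{u} R) (N : ModuleCat.{u} R)
    (_ : Module.Finite R M) (_ : Module.Finite R N),
    Module.annihilator R (ExtM R m M N)


/-- The one-dimensional D-infinity hypersurface `k⟦x,y⟧/(x²y)`. -/
noncomputable abbrev Dinf (k : Type u) [Field k] : Type u :=
  (MvPowerSeries (Fin 2) k) ⧸
    (Ideal.span {(MvPowerSeries.X (0 : Fin 2) : MvPowerSeries (Fin 2) k) ^ 2 *
      MvPowerSeries.X (1 : Fin 2)})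

/-- The image of `x` in `k⟦x,y⟧/(x²y)`. -/
noncomputable def dx (k : Type u) [Field k] : Dinf k :=
  Ideal.Quotient.mk _ (MvPowerSeries.X 0)

/-- The image of `y` in `k⟦x,y⟧/(x²y)`. -/
noncomputable def dy (k : Type u) [Field k] : Dinf k :=
  Ideal.Quotient.mk _ (MvPowerSeries.X 1)

/-!
By the matrix criterion, `r` annihilates the stable endomorphisms of `coker γ` iff there are
matrices `S`, `A` with `S γ = 0` and `S = r • 1 + γ A`. In `k⟦x,y⟧/(x²y)` the left kernel of `γₙ`
is spanned by the rows of `δₙ = ((xy, y^{n+1}), (0, -xy))`; comparing second columns gives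
`r ∈ (x², xy, y^{n+1})`, and the rows of `δₙ` give witnesses for the generators. Finally
`x ∉ (x², xy, y^{n+1})`, because `(x, y)` is a proper ideal.
-/

section StableAnnihilator

variable {R}

theorem mem_stAnn_iff {M : Type u} [AddCommGroup M] [Module R M] (r : R) :
    r ∈ stAnn R M ↔ r • LinearMap.id ∈ projStable R M M := by
  rw [stAnn, Module.mem_annihilator]
  refine ⟨fun h ↦ ?_, fun h z ↦ ?_⟩
  · rw [← Submodule.Quotient.mk_eq_zero]
    exact h (Submodule.Quotient.mk LinearMap.id)
  · obtain ⟨f, rfl⟩ := Submodule.Quotient.mk_surjective (projStable R M M) z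
    obtain ⟨P, _, _, _, g, h, hgh⟩ := h
    change Submodule.Quotient.mk (r • f) = (0 : (M →ₗ[R] M) ⧸ projStable R M M)
    rw [Submodule.Quotient.mk_eq_zero]
    refine ⟨P, inferInstance, inferInstance, inferInstance, g, f ∘ₗ h, ?_⟩
    rw [LinearMap.comp_assoc, ← hgh, LinearMap.comp_smul, LinearMap.comp_id]

theorem smul_id_mem_projStable_iff {F N : Type u} [AddCommGroup F] [Module R F]
    [Module.Projective R F] [AddCommGroup N] [Module R N] [Module.Projective R N]
    (φ : N →ₗ[R] F) (r : R) :
    r • LinearMap.id ∈ projStable R (F ⧸ LinearMap.range φ) (F ⧸ LinearMap.range φ) ↔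
      ∃ (σ : F →ₗ[R] F) (τ : F →ₗ[R] N), σ ∘ₗ φ = 0 ∧ σ = r • LinearMap.id + φ ∘ₗ τ := by
  set π := (LinearMap.range φ).mkQ
  constructor
  · rintro ⟨P, _, _, _, g, h, hgh⟩
    obtain ⟨h', hh'⟩ := Module.projective_lifting_property π h (LinearMap.range φ).mkQ_surjective
    set σ := h' ∘ₗ g ∘ₗ π
    have hσ : π ∘ₗ σ = r • π := by
      rw [← LinearMap.comp_assoc, hh', ← LinearMap.comp_assoc, ← hgh, LinearMap.smul_comp,
        LinearMap.id_comp]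
    have hrange : LinearMap.range (σ - r • LinearMap.id) ≤ LinearMap.range φ := by
      rw [← Submodule.ker_mkQ (LinearMap.range φ), LinearMap.range_le_ker_iff, LinearMap.comp_sub,
        LinearMap.comp_smul, LinearMap.comp_id]
      exact sub_eq_zero.2 hσ
    obtain ⟨τ, hτ⟩ := Module.projective_lifting_property φ.rangeRestrict
      ((σ - r • LinearMap.id).codRestrict (LinearMap.range φ) fun v ↦
        hrange (LinearMap.mem_range_self _ v))
      φ.surjective_rangeRestrict
    refine ⟨σ, τ, ?_, ?_⟩
    · rw [LinearMap.comp_assoc, LinearMap.comp_assoc, LinearMap.range_mkQ_comp, LinearMap.comp_zero,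
        LinearMap.comp_zero]
    · ext v
      have := congr(($hτ v : F))
      simp only [LinearMap.comp_apply, LinearMap.rangeRestrict, LinearMap.codRestrict_apply,
        LinearMap.sub_apply] at this
      simp [this]
  · rintro ⟨σ, τ, hσφ, rfl⟩
    have hker : LinearMap.range φ ≤ LinearMap.ker (r • LinearMap.id + φ ∘ₗ τ) :=
      LinearMap.range_le_ker_iff.2 hσφ
    refine ⟨F, inferInstance, inferInstance, inferInstance, (LinearMap.range φ).liftQ _ hker, π, ?_⟩
    refine Submodule.linearMap_qext _ (LinearMap.ext fun v ↦ ?_)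
    simp [π, Submodule.Quotient.mk_eq_zero]

theorem mem_stAnn_cokernel_iff {ι κ : Type} [Fintype ι] [DecidableEq ι] [Fintype κ]
    [DecidableEq κ] (G : Matrix ι κ R) (r : R) :
    r ∈ stAnn R ((ι → R) ⧸ LinearMap.range (Matrix.toLin' G)) ↔
      ∃ (S : Matrix ι ι R) (A : Matrix κ ι R), S * G = 0 ∧ S = r • 1 + G * A := by
  rw [mem_stAnn_iff, smul_id_mem_projStable_iff, Matrix.toLin'.surjective.exists]
  refine exists_congr fun S ↦ Matrix.toLin'.surjective.exists.trans (exists_congr fun A ↦ ?_)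
  rw [← Matrix.toLin'_mul, ← Matrix.toLin'_mul, ← Matrix.toLin'_one, ← map_smul, ← map_add,
    ← map_zero Matrix.toLin', Matrix.toLin'.injective.eq_iff, Matrix.toLin'.injective.eq_iff]

end StableAnnihilator

namespace MvPowerSeries

variable {σ R : Type*}

theorem X_ne_zero [Semiring R] [Nontrivial R] (s : σ) : (X s : MvPowerSeries σ R) ≠ 0 := by
  classical
  intro h
  simpa [coeff_X] using congr(coeff (Finsupp.single s 1) $h)

theorem X_dvd_of_X_dvd_X_pow_mul [CommSemiring R] {s t : σ} (hst : s ≠ t) (m : ℕ)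
    {f : MvPowerSeries σ R} (h : X s ∣ X t ^ m * f) : X s ∣ f := by
  classical
  rw [X_dvd_iff] at h ⊢
  intro e he
  have := h (Finsupp.single t m + e) (by simp [hst, he])
  rwa [X_pow_eq, coeff_add_monomial_mul, one_mul] at this

end MvPowerSeries

namespace Dinf

open MvPowerSeries

variable {k : Type u} [Field k]

theorem dx_sq_mul_dy : dx k ^ 2 * dy k = 0 := by
  rw [dx, dy, ← map_pow, ← map_mul, Ideal.Quotient.eq_zero_iff_mem]
  exact Ideal.subset_span rfl

theorem dx_mul_dy_dvd_of_dx_mul_eq_zero {r : Dinf k} (h : dx k * r = 0) : dx k * dy k ∣ r := by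
  obtain ⟨f, rfl⟩ := Ideal.Quotient.mk_surjective r
  rw [dx, ← map_mul, Ideal.Quotient.eq_zero_iff_mem, Ideal.mem_span_singleton] at h
  obtain ⟨g, hg⟩ := h
  have hf : f = X 0 * X 1 * g := mul_left_cancel₀ (X_ne_zero 0) (by rw [hg]; ring)
  exact ⟨Ideal.Quotient.mk _ g, by rw [hf, map_mul, map_mul, dx, dy]⟩

theorem dx_dvd_of_dy_pow_mul_eq_dx_mul {m : ℕ} {r s : Dinf k} (h : dy k ^ m * r = dx k * s) :
    dx k ∣ r := by
  obtain ⟨f, rfl⟩ := Ideal.Quotient.mk_surjective r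
  obtain ⟨g, rfl⟩ := Ideal.Quotient.mk_surjective s
  rw [dx, dy, ← map_pow, ← map_mul, ← map_mul, Ideal.Quotient.eq, Ideal.mem_span_singleton] at h
  obtain ⟨c, hc⟩ := h
  obtain ⟨t, rfl⟩ := X_dvd_of_X_dvd_X_pow_mul (s := (0 : Fin 2)) (t := 1) (f := f) (by decide) m
    ⟨g + X 0 * X 1 * c, by linear_combination hc⟩
  exact ⟨Ideal.Quotient.mk _ t, by rw [map_mul, dx]⟩

theorem dx_mul_add_dy_mul_ne_one (a b : Dinf k) : dx k * a + dy k * b ≠ 1 := by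
  obtain ⟨f, rfl⟩ := Ideal.Quotient.mk_surjective a
  obtain ⟨g, rfl⟩ := Ideal.Quotient.mk_surjective b
  rw [dx, dy, ← map_mul, ← map_mul, ← map_add, ← map_one (Ideal.Quotient.mk _), Ne,
    Ideal.Quotient.eq, Ideal.mem_span_singleton]
  rintro ⟨c, hc⟩
  simpa using congr(constantCoeff $hc)

variable (k) in
noncomputable def gamma (n : ℕ) : Matrix (Fin 2) (Fin 2) (Dinf k) := !![dx k, dy k ^ n; 0, -dx k]

variable {n : ℕ}

theorem dx_mul_dy_mul_dx : dx k * dy k * dx k = 0 := by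
  linear_combination dx_sq_mul_dy (k := k)

theorem span_le_stAnn_cokernel_gamma :
    Ideal.span {dx k ^ 2, dx k * dy k, dy k ^ (n + 1)} ≤
      stAnn (Dinf k) ((Fin 2 → Dinf k) ⧸ LinearMap.range (Matrix.toLin' (gamma k n))) := by
  simp only [Ideal.span_le, Set.insert_subset_iff, Set.singleton_subset_iff, SetLike.mem_coe,
    mem_stAnn_cokernel_iff]
  refine ⟨⟨0, -gamma k n, zero_mul _, ?_⟩,
    ⟨!![dx k * dy k, dy k ^ (n + 1); 0, 0], !![0, 0; 0, dy k], ?_, ?_⟩,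
    ⟨!![0, 0; dx k * dy k, dy k ^ (n + 1)], !![0, 0; -dy k, 0], ?_, ?_⟩⟩
  -- `γₙ² = x² • 1`; for `xy` and `y^{n+1}`, `S` carries the row `(xy, y^{n+1})` of `δₙ`.
  all_goals
    ext i j
    fin_cases i <;> fin_cases j <;> simp [gamma, Matrix.mul_apply, dx_mul_dy_mul_dx] <;> ring

theorem exists_eq_of_mul_gamma_eq_zero {S : Matrix (Fin 2) (Fin 2) (Dinf k)}
    (hS : S * gamma k n = 0) (i : Fin 2) :
    ∃ u v, S i 1 = dy k ^ (n + 1) * u + dx k * dy k * v := by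
  have h0 : S i 0 * dx k = 0 := by simpa [gamma, Matrix.mul_apply] using congr_fun₂ hS i 0
  have h1 : S i 0 * dy k ^ n + S i 1 * -dx k = 0 := by
    simpa [gamma, Matrix.mul_apply] using congr_fun₂ hS i 1
  obtain ⟨u, hu⟩ := dx_mul_dy_dvd_of_dx_mul_eq_zero (r := S i 0) (by linear_combination h0)
  obtain ⟨v, hv⟩ := dx_mul_dy_dvd_of_dx_mul_eq_zero (r := S i 1 - dy k ^ (n + 1) * u)
    (by linear_combination dy k ^ n * hu - h1)
  exact ⟨u, v, by linear_combination hv⟩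

theorem mem_span_of_mem_stAnn_cokernel_gamma {r : Dinf k}
    (hr : r ∈ stAnn (Dinf k) ((Fin 2 → Dinf k) ⧸ LinearMap.range (Matrix.toLin' (gamma k n)))) :
    r ∈ Ideal.span {dx k ^ 2, dx k * dy k, dy k ^ (n + 1)} := by
  obtain ⟨S, A, hS, hSA⟩ := (mem_stAnn_cokernel_iff _ r).1 hr
  obtain ⟨u₀, v₀, h₀⟩ := exists_eq_of_mul_gamma_eq_zero hS 0
  obtain ⟨u₁, v₁, h₁⟩ := exists_eq_of_mul_gamma_eq_zero hS 1
  have hS₀ : S 0 1 = dx k * A 0 1 + dy k ^ n * A 1 1 := by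
    simp [hSA, gamma, Matrix.vecMul, dotProduct]
  have hS₁ : S 1 1 = r + -dx k * A 1 1 := by
    simp [hSA, gamma, Matrix.vecMul, dotProduct]
  obtain ⟨e, he⟩ := dx_dvd_of_dy_pow_mul_eq_dx_mul (m := n) (r := dy k * u₀ - A 1 1)
    (s := A 0 1 - dy k * v₀) (by linear_combination hS₀ - h₀)
  exact Submodule.mem_span_triple.2 ⟨-e, u₀ + v₁, u₁, by linear_combination hS₁ - h₁ + dx k * he⟩

theorem stAnn_cokernel_gamma :
    stAnn (Dinf k) ((Fin 2 → Dinf k) ⧸ LinearMap.range (Matrix.toLin' (gamma k n))) =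
      Ideal.span {dx k ^ 2, dx k * dy k, dy k ^ (n + 1)} :=
  le_antisymm (fun _ ↦ mem_span_of_mem_stAnn_cokernel_gamma) span_le_stAnn_cokernel_gamma

theorem dx_notMem_span_dx_sq_dx_mul_dy_dy_pow (m : ℕ) :
    dx k ∉ Ideal.span {dx k ^ 2, dx k * dy k, dy k ^ (m + 1)} := by
  intro h
  obtain ⟨a, b, c, habc⟩ := Submodule.mem_span_triple.1 h
  obtain ⟨t, rfl⟩ := dx_dvd_of_dy_pow_mul_eq_dx_mul (m := m + 1) (r := c)
    (s := 1 - a * dx k - b * dy k) (by linear_combination habc)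
  obtain ⟨w, hw⟩ := dx_mul_dy_dvd_of_dx_mul_eq_zero
    (r := 1 - a * dx k - b * dy k - dy k ^ (m + 1) * t) (by linear_combination -habc)
  exact dx_mul_add_dy_mul_ne_one (a + dy k * w) (b + dy k ^ m * t) (by linear_combination -hw)

end Dinf

open Dinf in
theorem stmt10_general (k : Type u) [Field k] (n : ℕ) :
    ¬ Ideal.span {dx k} ≤
        stAnn (Dinf k) ((Fin 2 → Dinf k) ⧸
          LinearMap.range (Matrix.toLin' !![dx k, dy k ^ n; 0, -dx k])) ∧
    stAnn (Dinf k) ((Fin 2 → Dinf k) ⧸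
        LinearMap.range (Matrix.toLin' !![dx k, dy k ^ n; 0, -dx k]))
      = Ideal.span {dx k ^ 2, dx k * dy k, dy k ^ (n + 1)} ∧
    Ideal.span {dx k ^ 2, dx k * dy k, dy k ^ (n + 1)}
      < Ideal.span {dx k, dy k ^ (n + 1)} := by
  have hann := stAnn_cokernel_gamma (k := k) (n := n)
  have hx := dx_notMem_span_dx_sq_dx_mul_dy_dy_pow (k := k) n
  have hx' : dx k ∈ Ideal.span {dx k, dy k ^ (n + 1)} := Ideal.subset_span (by simp)
  refine ⟨fun h ↦ hx (hann ▸ h (Ideal.mem_span_singleton_self _)), hann, ?_⟩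
  refine SetLike.lt_iff_le_and_exists.2 ⟨?_, dx k, hx', hx⟩
  rw [Ideal.span_le, Set.insert_subset_iff, Set.insert_subset_iff, Set.singleton_subset_iff]
  exact ⟨by simpa [sq] using Ideal.mul_mem_left _ (dx k) hx', Ideal.mul_mem_right _ _ hx',
    Ideal.subset_span (by simp)⟩

/-- In `R = k⟦x,y⟧/(x²y)` (char k ≠ 2), with `γₙ = ((x, yⁿ),(0,-x))`
and `M = coker γₙ` (`n ≥ 1`), the ideal `xR` is NOT contained in the annihilator of
`stableHom(M,M)`; consequently `Ann(coker γₙ) = (x², xy, y^{n+1})R`, a proper subideal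
of `(x, y^{n+1})R`. -/
theorem stmt10 (k : Type u) [Field k] (hchar : ringChar k ≠ 2) (n : ℕ) (hn : 1 ≤ n) :
    ¬ Ideal.span {dx k} ≤
        stAnn (Dinf k) ((Fin 2 → Dinf k) ⧸
          LinearMap.range (Matrix.toLin' !![dx k, dy k ^ n; 0, -dx k])) ∧
    stAnn (Dinf k) ((Fin 2 → Dinf k) ⧸
        LinearMap.range (Matrix.toLin' !![dx k, dy k ^ n; 0, -dx k]))
      = Ideal.span {dx k ^ 2, dx k * dy k, dy k ^ (n + 1)} ∧
    Ideal.span {dx k ^ 2, dx k * dy k, dy k ^ (n + 1)}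
      < Ideal.span {dx k, dy k ^ (n + 1)} :=
  stmt10_general k n
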